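/- Let M(x) = Σ_{j=1}^2 a_j(x) cos(λξ_j·x) with unit vectors ξ₁ ≠ ±ξ₂, λξ_j ∈ ℤ², and smooth amplitudes a_j. Then ΛM ∇^⊥M = (λ/2) ∇^⊥(M²) − (λ/4) Σ_{j=1}^2 ξ_j^⊥ (ξ_j·∇)(a_j²) + E, where the error E is a finite sum of terms each of which either (i) contains a factor T_{1,λξ_j}[a_j] or T_{2,λξ_j}[a_j], or (ii) contains a factor that is a derivative of an amplitude times an amplitude multiplied by an oscillation cos or sin of 2λξ_j·x or of mixed phases λξ_j·x, λξ_{j'}·x with j ≠ j'. -/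

import Mathlib

noncomputable def ee (k : ℤ × ℤ) (x : ℝ × ℝ) : ℂ :=
  Complex.exp (Complex.I * Complex.ofReal ((k.1 : ℝ) * x.1 + (k.2 : ℝ) * x.2))

noncomputable def nrm (k : ℤ × ℤ) : ℝ := Real.sqrt (((k.1 : ℝ)) ^ 2 + ((k.2 : ℝ)) ^ 2)

/-- an amplitude: a trigonometric polynomial with coefficients `c` on `S` -/
noncomputable def amp (S : Finset (ℤ × ℤ)) (c : ℤ × ℤ → ℂ) (x : ℝ × ℝ) : ℂ :=
  ∑ k ∈ S, c k * ee k x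

/-- directional derivative `(u·∇)a` of an amplitude -/
noncomputable def dAmp (S : Finset (ℤ × ℤ)) (c : ℤ × ℤ → ℂ) (u : ℝ × ℝ) (x : ℝ × ℝ) : ℂ :=
  ∑ k ∈ S, Complex.I * Complex.ofReal (u.1 * (k.1 : ℝ) + u.2 * (k.2 : ℝ)) * c k * ee k x

noncomputable def phase (K : ℤ × ℤ) (x : ℝ × ℝ) : ℝ := (K.1 : ℝ) * x.1 + (K.2 : ℝ) * x.2

/-- `T_{1,λξ}[a]` -/
noncomputable def T1amp (lam : ℝ) (K : ℤ × ℤ) (S : Finset (ℤ × ℤ)) (c : ℤ × ℤ → ℂ)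
    (x : ℝ × ℝ) : ℂ :=
  ∑ k ∈ S, Complex.ofReal ((nrm (K + k) + nrm (K - k)) / 2 - lam) * c k * ee k x

/-- `T_{2,λξ}[a]` -/
noncomputable def T2amp (ξ : ℝ × ℝ) (K : ℤ × ℤ) (S : Finset (ℤ × ℤ)) (c : ℤ × ℤ → ℂ)
    (x : ℝ × ℝ) : ℂ :=
  ∑ k ∈ S, Complex.I * Complex.ofReal
    ((nrm (K + k) - nrm (K - k)) / 2 - (ξ.1 * (k.1 : ℝ) + ξ.2 * (k.2 : ℝ))) * c k * ee k x

/-- `∇^⊥ f = (-∂₂f, ∂₁f)` -/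
noncomputable def perpD (f : ℝ × ℝ → ℂ) (x : ℝ × ℝ) : ℂ × ℂ :=
  (-(fderiv ℝ f x ((0 : ℝ), (1 : ℝ))), fderiv ℝ f x ((1 : ℝ), (0 : ℝ)))

/-- the building block `M = ∑_j a_j cos(λξ_j·x)` -/
noncomputable def blockM (S : Fin 2 → Finset (ℤ × ℤ)) (c : Fin 2 → ℤ × ℤ → ℂ)
    (K : Fin 2 → ℤ × ℤ) (x : ℝ × ℝ) : ℂ :=
  ∑ j : Fin 2, amp (S j) (c j) x * Complex.ofReal (Real.cos (phase (K j) x))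

/-- `ΛM`, computed frequency by frequency -/
noncomputable def lamM (S : Fin 2 → Finset (ℤ × ℤ)) (c : Fin 2 → ℤ × ℤ → ℂ)
    (K : Fin 2 → ℤ × ℤ) (x : ℝ × ℝ) : ℂ :=
  ∑ j : Fin 2, ∑ k ∈ S j, c j k / 2 *
    (Complex.ofReal (nrm (k + K j)) * ee (k + K j) x
      + Complex.ofReal (nrm (k - K j)) * ee (k - K j) x)


/-! Splitting each wave as `Λ(a cos φ) = λ a cos φ + (ξ·∇a) sin φ + T₁[a] cos φ + T₂[a] sin φ`,
the part `λ M ∇^⊥M` is `(λ/2) ∇^⊥(M²)` because `∇^⊥` is a derivation, and the `T`-parts are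
errors of kind (i). In `(ξ_j·∇a_j) sin φ_j ∇^⊥M` the only non-oscillatory piece comes from
`∇^⊥` hitting `cos φ_j` itself, giving `-λ sin² φ_j a_j (ξ_j·∇a_j) ξ_j^⊥`; writing
`sin² = (1 - cos 2φ)/2` splits off `-(λ/4) ξ_j^⊥ (ξ_j·∇)(a_j²)`, and all the rest carries
`cos 2φ_j`, `sin 2φ_j` or a product of the two different phases. -/

lemma phase_add (k K : ℤ × ℤ) (x : ℝ × ℝ) : phase (k + K) x = phase k x + phase K x := by
  simp only [phase, Prod.fst_add, Prod.snd_add, Int.cast_add]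
  ring

lemma phase_neg (K : ℤ × ℤ) (x : ℝ × ℝ) : phase (-K) x = -phase K x := by
  simp only [phase, Prod.fst_neg, Prod.snd_neg, Int.cast_neg]
  ring

lemma ee_eq_exp (k : ℤ × ℤ) (x : ℝ × ℝ) : ee k x = Complex.exp (phase k x * Complex.I) := by
  rw [ee, mul_comm, phase]

lemma ee_eq_cos_add_sin (K : ℤ × ℤ) (x : ℝ × ℝ) :
    ee K x = Real.cos (phase K x) + Real.sin (phase K x) * Complex.I := by
  rw [ee_eq_exp, Complex.exp_mul_I, Complex.ofReal_cos, Complex.ofReal_sin]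

lemma ee_add_eq (k K : ℤ × ℤ) (x : ℝ × ℝ) :
    ee (k + K) x = ee k x * (Real.cos (phase K x) + Real.sin (phase K x) * Complex.I) := by
  rw [ee_eq_exp, ee_eq_exp, phase_add, Complex.ofReal_add, add_mul, Complex.exp_add,
    ← ee_eq_exp, ← ee_eq_exp, ee_eq_cos_add_sin K]

lemma ee_sub_eq (k K : ℤ × ℤ) (x : ℝ × ℝ) :
    ee (k - K) x = ee k x * (Real.cos (phase K x) - Real.sin (phase K x) * Complex.I) := by
  rw [sub_eq_add_neg, ee_add_eq, phase_neg, Real.cos_neg, Real.sin_neg, Complex.ofReal_neg,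
    neg_mul, ← sub_eq_add_neg]

lemma nrm_sub_comm (k K : ℤ × ℤ) : nrm (k - K) = nrm (K - k) := by
  rw [← neg_sub, nrm, nrm, Prod.fst_neg, Prod.snd_neg, Int.cast_neg, Int.cast_neg, neg_sq, neg_sq]

lemma lambda_amp_mul_cos_eq (lam : ℝ) (ξ : ℝ × ℝ) (K : ℤ × ℤ) (S : Finset (ℤ × ℤ))
    (c : ℤ × ℤ → ℂ) (x : ℝ × ℝ) :
    ∑ k ∈ S, c k / 2 * (nrm (k + K) * ee (k + K) x + nrm (k - K) * ee (k - K) x)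
      = lam * amp S c x * Real.cos (phase K x) + dAmp S c ξ x * Real.sin (phase K x)
        + T1amp lam K S c x * Real.cos (phase K x)
        + T2amp ξ K S c x * Real.sin (phase K x) := by
  simp only [amp, dAmp, T1amp, T2amp, Finset.mul_sum, Finset.sum_mul, ← Finset.sum_add_distrib]
  refine Finset.sum_congr rfl fun k _ => ?_
  rw [ee_add_eq, ee_sub_eq, add_comm k K, nrm_sub_comm]
  push_cast
  ring

lemma lamM_eq (lam : ℝ) (ξ : Fin 2 → ℝ × ℝ) (S : Fin 2 → Finset (ℤ × ℤ))
    (c : Fin 2 → ℤ × ℤ → ℂ) (K : Fin 2 → ℤ × ℤ) (x : ℝ × ℝ) :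
    lamM S c K x = lam * blockM S c K x
      + ∑ j, (dAmp (S j) (c j) (ξ j) x * Real.sin (phase (K j) x)
        + T1amp lam (K j) (S j) (c j) x * Real.cos (phase (K j) x)
        + T2amp (ξ j) (K j) (S j) (c j) x * Real.sin (phase (K j) x)) := by
  rw [lamM, blockM, Finset.mul_sum, ← Finset.sum_add_distrib]
  refine Finset.sum_congr rfl fun j _ => ?_
  rw [lambda_amp_mul_cos_eq lam (ξ j)]
  ring

noncomputable def freqCLM (k : ℤ × ℤ) : ℝ × ℝ →L[ℝ] ℝ :=
  (k.1 : ℝ) • ContinuousLinearMap.fst ℝ ℝ ℝ + (k.2 : ℝ) • ContinuousLinearMap.snd ℝ ℝ ℝ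

lemma coe_freqCLM (k : ℤ × ℤ) : ⇑(freqCLM k) = phase k := by
  ext u; simp [freqCLM, phase]

lemma hasFDerivAt_ee (k : ℤ × ℤ) (x : ℝ × ℝ) :
    HasFDerivAt (ee k) (ee k x • Complex.I • Complex.ofRealCLM.comp (freqCLM k)) x := by
  have h := ((Complex.ofRealCLM.comp (freqCLM k)).hasFDerivAt (x := x)).const_mul Complex.I
  exact h.cexp

lemma fderiv_ee_apply (k : ℤ × ℤ) (x u : ℝ × ℝ) :
    fderiv ℝ (ee k) x u = Complex.I * phase k u * ee k x := by
  rw [(hasFDerivAt_ee k x).fderiv]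
  simp [coe_freqCLM]
  ring

lemma differentiable_amp (S : Finset (ℤ × ℤ)) (c : ℤ × ℤ → ℂ) : Differentiable ℝ (amp S c) :=
  fun x => (HasFDerivAt.fun_sum fun k _ => (hasFDerivAt_ee k x).const_mul (c k)).differentiableAt

lemma fderiv_amp_apply (S : Finset (ℤ × ℤ)) (c : ℤ × ℤ → ℂ) (x u : ℝ × ℝ) :
    fderiv ℝ (amp S c) x u = dAmp S c u x := by
  have hdiff : ∀ k ∈ S, DifferentiableAt ℝ (fun y => c k * ee k y) x :=
    fun k _ => (hasFDerivAt_ee k x).differentiableAt.const_mul (c k)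
  rw [show amp S c = fun y => ∑ k ∈ S, c k * ee k y from rfl, fderiv_fun_sum hdiff, dAmp]
  simp only [sum_apply, fderiv_const_mul (hasFDerivAt_ee _ x).differentiableAt, smul_apply,
    fderiv_ee_apply, smul_eq_mul, phase]
  refine Finset.sum_congr rfl fun k _ => ?_
  push_cast
  ring

lemma hasFDerivAt_cos_phase (K : ℤ × ℤ) (x : ℝ × ℝ) :
    HasFDerivAt (fun y => (Real.cos (phase K y) : ℂ))
      (Complex.ofRealCLM.comp (-Real.sin (phase K x) • freqCLM K)) x := by
  have h := (freqCLM K).hasFDerivAt (x := x) |>.cos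
  rw [coe_freqCLM] at h
  exact Complex.ofRealCLM.hasFDerivAt.comp x h

lemma fderiv_cos_phase_apply (K : ℤ × ℤ) (x u : ℝ × ℝ) :
    fderiv ℝ (fun y => (Real.cos (phase K y) : ℂ)) x u = -(Real.sin (phase K x) * phase K u) := by
  rw [(hasFDerivAt_cos_phase K x).fderiv]
  simp [coe_freqCLM]

lemma differentiable_blockM (S : Fin 2 → Finset (ℤ × ℤ)) (c : Fin 2 → ℤ × ℤ → ℂ)
    (K : Fin 2 → ℤ × ℤ) : Differentiable ℝ (blockM S c K) := fun x =>
  (HasFDerivAt.fun_sum fun j _ => (differentiable_amp (S j) (c j) x).hasFDerivAt.mul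
    (hasFDerivAt_cos_phase (K j) x)).differentiableAt

section perpD

variable {f g : ℝ × ℝ → ℂ} {x : ℝ × ℝ}

lemma perpD_mul (hf : DifferentiableAt ℝ f x) (hg : DifferentiableAt ℝ g x) :
    perpD (fun y => f y * g y) x = f x • perpD g x + g x • perpD f x := by
  ext <;> simp [perpD, fderiv_fun_mul hf hg, add_comm]

lemma fderiv_sq_apply (hf : DifferentiableAt ℝ f x) (u : ℝ × ℝ) :
    fderiv ℝ (fun y => f y ^ 2) x u = 2 * f x * fderiv ℝ f x u := by
  simp [fderiv_fun_pow 2 hf]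

lemma perpD_sq (hf : DifferentiableAt ℝ f x) :
    perpD (fun y => f y ^ 2) x = (2 * f x) • perpD f x := by
  ext <;> simp [perpD, fderiv_sq_apply hf]

lemma perpD_sum {ι : Type*} (s : Finset ι) {F : ι → ℝ × ℝ → ℂ}
    (hF : ∀ i ∈ s, DifferentiableAt ℝ (F i) x) :
    perpD (fun y => ∑ i ∈ s, F i y) x = ∑ i ∈ s, perpD (F i) x := by
  ext <;> simp [perpD, fderiv_fun_sum hF, Prod.fst_sum, Prod.snd_sum]

end perpD

noncomputable def perpC (v : ℝ × ℝ) : ℂ × ℂ := ((-v.2 : ℝ), (v.1 : ℝ))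

lemma perpC_smul (r : ℝ) (v : ℝ × ℝ) : perpC (r • v) = (r : ℂ) • perpC v := by
  ext <;> simp [perpC]

lemma perpD_cos_phase (K : ℤ × ℤ) (x : ℝ × ℝ) :
    perpD (fun y => (Real.cos (phase K y) : ℂ)) x
      = -(Real.sin (phase K x) : ℂ) • perpC ((K.1 : ℝ), (K.2 : ℝ)) := by
  simp only [perpD, fderiv_cos_phase_apply]
  ext <;> simp [perpC, phase]

lemma perpD_amp (S : Finset (ℤ × ℤ)) (c : ℤ × ℤ → ℂ) (x : ℝ × ℝ) :
    perpD (amp S c) x = dAmp S c (0, 1) x • (-1, 0) + dAmp S c (1, 0) x • (0, 1) := by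
  ext <;> simp [perpD, fderiv_amp_apply]

lemma perpD_blockM {lam : ℝ} {ξ : Fin 2 → ℝ × ℝ} {K : Fin 2 → ℤ × ℤ}
    (hK : ∀ j, (((K j).1 : ℝ), ((K j).2 : ℝ)) = lam • ξ j)
    (S : Fin 2 → Finset (ℤ × ℤ)) (c : Fin 2 → ℤ × ℤ → ℂ) (x : ℝ × ℝ) :
    perpD (blockM S c K) x = ∑ j, ((Real.cos (phase (K j) x) : ℂ) • perpD (amp (S j) (c j)) x
      - (lam * Real.sin (phase (K j) x) * amp (S j) (c j) x) • perpC (ξ j)) := by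
  rw [show blockM S c K = fun y => ∑ j, amp (S j) (c j) y * Real.cos (phase (K j) y) from rfl,
    perpD_sum _ fun j _ => ((differentiable_amp _ _ x).fun_mul
      (hasFDerivAt_cos_phase (K j) x).differentiableAt)]
  refine Finset.sum_congr rfl fun j _ => ?_
  rw [perpD_mul (differentiable_amp _ _ x) (hasFDerivAt_cos_phase (K j) x).differentiableAt,
    perpD_cos_phase, hK j, perpC_smul]
  module

noncomputable def oscTerm (osc : ℝ × ℝ → ℝ) (g h : ℝ × ℝ → ℂ) (v : ℂ × ℂ) (x : ℝ × ℝ) : ℂ × ℂ :=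
  ((osc x : ℂ) * g x * h x) • v

/-- The error terms produced by the wave `a_j cos φ_j`; in `Fin 2`, `j + 1` is the other wave. -/
noncomputable def waveError (lam : ℝ) (ξ : Fin 2 → ℝ × ℝ) (S : Fin 2 → Finset (ℤ × ℤ))
    (c : Fin 2 → ℤ × ℤ → ℂ) (K : Fin 2 → ℤ × ℤ) (j : Fin 2) : Fin 8 → ℝ × ℝ → ℂ × ℂ :=
  ![fun x => T1amp lam (K j) (S j) (c j) x •
      ((Real.cos (phase (K j) x) : ℂ) • perpD (blockM S c K) x),
    fun x => T2amp (ξ j) (K j) (S j) (c j) x •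
      ((Real.sin (phase (K j) x) : ℂ) • perpD (blockM S c K) x),
    oscTerm (fun x => Real.sin (2 * phase (K j) x)) (dAmp (S j) (c j) (ξ j))
      (dAmp (S j) (c j) (0, 1)) ((2⁻¹ : ℂ) • (-1, 0)),
    oscTerm (fun x => Real.sin (2 * phase (K j) x)) (dAmp (S j) (c j) (ξ j))
      (dAmp (S j) (c j) (1, 0)) ((2⁻¹ : ℂ) • (0, 1)),
    oscTerm (fun x => Real.sin (phase (K j) x) * Real.cos (phase (K (j + 1)) x))
      (dAmp (S j) (c j) (ξ j)) (dAmp (S (j + 1)) (c (j + 1)) (0, 1)) (-1, 0),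
    oscTerm (fun x => Real.sin (phase (K j) x) * Real.cos (phase (K (j + 1)) x))
      (dAmp (S j) (c j) (ξ j)) (dAmp (S (j + 1)) (c (j + 1)) (1, 0)) (0, 1),
    oscTerm (fun x => Real.sin (phase (K j) x) * Real.sin (phase (K (j + 1)) x))
      (dAmp (S j) (c j) (ξ j)) (amp (S (j + 1)) (c (j + 1))) (-(lam : ℂ) • perpC (ξ (j + 1))),
    oscTerm (fun x => Real.cos (2 * phase (K j) x)) (dAmp (S j) (c j) (ξ j)) (amp (S j) (c j))
      ((lam / 2 : ℂ) • perpC (ξ j))]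

lemma lamM_smul_perpD_blockM {lam : ℝ} {ξ : Fin 2 → ℝ × ℝ} {K : Fin 2 → ℤ × ℤ}
    (hK : ∀ j, (((K j).1 : ℝ), ((K j).2 : ℝ)) = lam • ξ j)
    (S : Fin 2 → Finset (ℤ × ℤ)) (c : Fin 2 → ℤ × ℤ → ℂ) (x : ℝ × ℝ) :
    lamM S c K x • perpD (blockM S c K) x
      = Complex.ofReal (lam / 2) • perpD (fun y => blockM S c K y ^ 2) x
        - Complex.ofReal (lam / 4) •
            (∑ j : Fin 2, fderiv ℝ (fun y => amp (S j) (c j) y ^ 2) x (ξ j) • perpC (ξ j))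
        + ∑ j, ∑ m, waveError lam ξ S c K j m x := by
  have hG := perpD_blockM hK S c x
  simp only [perpD_amp, Fin.sum_univ_two] at hG
  rw [lamM_eq lam ξ, perpD_sq (differentiable_blockM S c K x)]
  simp only [fderiv_sq_apply (differentiable_amp _ _ x), fderiv_amp_apply, Fin.sum_univ_two,
    Fin.sum_univ_eight, waveError, oscTerm, Matrix.cons_val, zero_add,
    show (1 + 1 : Fin 2) = 0 from rfl, Real.sin_two_mul, Real.cos_two_mul', Real.cos_sq']
  push_cast at hG ⊢
  -- `∇^⊥M` has to be expanded only where it meets the transport part `(ξ_j·∇a_j) sin φ_j` of `ΛM`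
  linear_combination (norm := module)
    (dAmp (S 0) (c 0) (ξ 0) x * Complex.sin (phase (K 0) x)
      + dAmp (S 1) (c 1) (ξ 1) x * Complex.sin (phase (K 1) x)) • hG

def HasRemainderFactor (lam : ℝ) (ξ : Fin 2 → ℝ × ℝ) (K : Fin 2 → ℤ × ℤ)
    (S : Fin 2 → Finset (ℤ × ℤ)) (c : Fin 2 → ℤ × ℤ → ℂ) (t : ℝ × ℝ → ℂ × ℂ) : Prop :=
  ∃ j : Fin 2, ∃ v : ℝ × ℝ → ℂ × ℂ,
    (∀ x, t x = T1amp lam (K j) (S j) (c j) x • v x)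
    ∨ (∀ x, t x = T2amp (ξ j) (K j) (S j) (c j) x • v x)

def IsBlockOscillation (K : Fin 2 → ℤ × ℤ) (osc : ℝ × ℝ → ℝ) : Prop :=
  (∃ j, osc = fun x => Real.cos (2 * phase (K j) x))
    ∨ (∃ j, osc = fun x => Real.sin (2 * phase (K j) x))
    ∨ (∃ j j' : Fin 2, j ≠ j' ∧
        (osc = (fun x => Real.cos (phase (K j) x) * Real.cos (phase (K j') x))
        ∨ osc = (fun x => Real.sin (phase (K j) x) * Real.sin (phase (K j') x))
        ∨ osc = (fun x => Real.sin (phase (K j) x) * Real.cos (phase (K j') x))))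

def IsOscillatoryTerm (K : Fin 2 → ℤ × ℤ) (S : Fin 2 → Finset (ℤ × ℤ))
    (c : Fin 2 → ℤ × ℤ → ℂ) (t : ℝ × ℝ → ℂ × ℂ) : Prop :=
  ∃ osc, IsBlockOscillation K osc ∧ ∃ (g h : ℝ × ℝ → ℂ) (vec : ℂ × ℂ),
    (∃ (j : Fin 2) (u : ℝ × ℝ), g = dAmp (S j) (c j) u)
    ∧ (∃ j' : Fin 2, h = amp (S j') (c j') ∨ ∃ u' : ℝ × ℝ, h = dAmp (S j') (c j') u')
    ∧ ∀ x, t x = (Complex.ofReal (osc x) * g x * h x) • vec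

lemma waveError_kind (lam : ℝ) (ξ : Fin 2 → ℝ × ℝ) (S : Fin 2 → Finset (ℤ × ℤ))
    (c : Fin 2 → ℤ × ℤ → ℂ) (K : Fin 2 → ℤ × ℤ) (j : Fin 2) (m : Fin 8) :
    HasRemainderFactor lam ξ K S c (waveError lam ξ S c K j m)
      ∨ IsOscillatoryTerm K S c (waveError lam ξ S c K j m) := by
  have hj : j ≠ j + 1 := by fin_cases j <;> decide
  fin_cases m
  · exact .inl ⟨j, _, .inl fun _ => rfl⟩
  · exact .inl ⟨j, _, .inr fun _ => rfl⟩
  · exact .inr ⟨_, .inr (.inl ⟨j, rfl⟩), _, _, _, ⟨j, _, rfl⟩, ⟨j, .inr ⟨_, rfl⟩⟩, fun _ => rfl⟩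
  · exact .inr ⟨_, .inr (.inl ⟨j, rfl⟩), _, _, _, ⟨j, _, rfl⟩, ⟨j, .inr ⟨_, rfl⟩⟩, fun _ => rfl⟩
  · exact .inr ⟨_, .inr (.inr ⟨j, j + 1, hj, .inr (.inr rfl)⟩), _, _, _, ⟨j, _, rfl⟩,
      ⟨j + 1, .inr ⟨_, rfl⟩⟩, fun _ => rfl⟩
  · exact .inr ⟨_, .inr (.inr ⟨j, j + 1, hj, .inr (.inr rfl)⟩), _, _, _, ⟨j, _, rfl⟩,
      ⟨j + 1, .inr ⟨_, rfl⟩⟩, fun _ => rfl⟩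
  · exact .inr ⟨_, .inr (.inr ⟨j, j + 1, hj, .inr (.inl rfl)⟩), _, _, _, ⟨j, _, rfl⟩,
      ⟨j + 1, .inl rfl⟩, fun _ => rfl⟩
  · exact .inr ⟨_, .inl ⟨j, rfl⟩, _, _, _, ⟨j, _, rfl⟩, ⟨j, .inl rfl⟩, fun _ => rfl⟩

theorem building_block_decomposition_general
    (lam : ℝ)
    (ξ : Fin 2 → ℝ × ℝ)
    (K : Fin 2 → ℤ × ℤ) (hK : ∀ j, (((K j).1 : ℝ), ((K j).2 : ℝ)) = lam • ξ j)
    (S : Fin 2 → Finset (ℤ × ℤ)) (c : Fin 2 → ℤ × ℤ → ℂ) :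
    ∃ (N : ℕ) (t : Fin N → ℝ × ℝ → ℂ × ℂ),
      (∀ x : ℝ × ℝ,
        lamM S c K x • perpD (blockM S c K) x
          = Complex.ofReal (lam / 2) • perpD (fun y => blockM S c K y ^ 2) x
            - Complex.ofReal (lam / 4) •
                (∑ j : Fin 2, fderiv ℝ (fun y => amp (S j) (c j) y ^ 2) x (ξ j) •
                  ((Complex.ofReal (-(ξ j).2), Complex.ofReal ((ξ j).1)) : ℂ × ℂ))
            + ∑ i, t i x)
      ∧ ∀ i : Fin N,
        -- (i) a factor T₁[a_j] or T₂[a_j]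
        (∃ j : Fin 2, ∃ v : ℝ × ℝ → ℂ × ℂ,
          (∀ x, t i x = T1amp lam (K j) (S j) (c j) x • v x)
          ∨ (∀ x, t i x = T2amp (ξ j) (K j) (S j) (c j) x • v x))
        -- (ii) an oscillatory factor times (derivative of amplitude)·(amplitude)
        ∨ (∃ osc : ℝ × ℝ → ℝ,
            ((∃ j, osc = fun x => Real.cos (2 * phase (K j) x))
              ∨ (∃ j, osc = fun x => Real.sin (2 * phase (K j) x))
              ∨ (∃ j j' : Fin 2, j ≠ j' ∧
                  (osc = (fun x => Real.cos (phase (K j) x) * Real.cos (phase (K j') x))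
                  ∨ osc = (fun x => Real.sin (phase (K j) x) * Real.sin (phase (K j') x))
                  ∨ osc = (fun x => Real.sin (phase (K j) x) * Real.cos (phase (K j') x)))))
            ∧ ∃ (g h : ℝ × ℝ → ℂ) (vec : ℂ × ℂ),
                (∃ (j : Fin 2) (u : ℝ × ℝ), g = dAmp (S j) (c j) u)
                ∧ (∃ j' : Fin 2, h = amp (S j') (c j')
                    ∨ ∃ u' : ℝ × ℝ, h = dAmp (S j') (c j') u')
                ∧ ∀ x, t i x = (Complex.ofReal (osc x) * g x * h x) • vec) := by
  refine ⟨2 * 8, fun i => waveError lam ξ S c K (finProdFinEquiv.symm i).1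
    (finProdFinEquiv.symm i).2, fun x => ?_, fun i => waveError_kind lam ξ S c K _ _⟩
  rw [lamM_smul_perpD_blockM hK,
    finProdFinEquiv.symm.sum_comp (fun p => waveError lam ξ S c K p.1 p.2 x),
    Fintype.sum_prod_type]
  rfl

/-- `ΛM ∇^⊥M = (λ/2)∇^⊥(M²) - (λ/4)∑_j ξ_j^⊥(ξ_j·∇)(a_j²) + E`
where `E` is a finite sum of terms each of which either contains a factor
`T_{1,λξ_j}[a_j]` or `T_{2,λξ_j}[a_j]`, or is an oscillation (`cos`/`sin` of `2λξ_j·x`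
or of mixed phases `λξ_j·x, λξ_{j'}·x`, `j ≠ j'`) times a derivative of an amplitude
times an amplitude (or a derivative of an amplitude). -/
theorem building_block_decomposition
    (lam : ℝ) (hlam : 0 < lam)
    (ξ : Fin 2 → ℝ × ℝ) (hunit : ∀ j, (ξ j).1 ^ 2 + (ξ j).2 ^ 2 = 1)
    (hne : ξ 0 ≠ ξ 1 ∧ ξ 0 ≠ -ξ 1)
    (K : Fin 2 → ℤ × ℤ) (hK : ∀ j, (((K j).1 : ℝ), ((K j).2 : ℝ)) = lam • ξ j)
    (S : Fin 2 → Finset (ℤ × ℤ)) (c : Fin 2 → ℤ × ℤ → ℂ) :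
    ∃ (N : ℕ) (t : Fin N → ℝ × ℝ → ℂ × ℂ),
      (∀ x : ℝ × ℝ,
        lamM S c K x • perpD (blockM S c K) x
          = Complex.ofReal (lam / 2) • perpD (fun y => blockM S c K y ^ 2) x
            - Complex.ofReal (lam / 4) •
                (∑ j : Fin 2, fderiv ℝ (fun y => amp (S j) (c j) y ^ 2) x (ξ j) •
                  ((Complex.ofReal (-(ξ j).2), Complex.ofReal ((ξ j).1)) : ℂ × ℂ))
            + ∑ i, t i x)
      ∧ ∀ i : Fin N,
        -- (i) a factor T₁[a_j] or T₂[a_j]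
        (∃ j : Fin 2, ∃ v : ℝ × ℝ → ℂ × ℂ,
          (∀ x, t i x = T1amp lam (K j) (S j) (c j) x • v x)
          ∨ (∀ x, t i x = T2amp (ξ j) (K j) (S j) (c j) x • v x))
        -- (ii) an oscillatory factor times (derivative of amplitude)·(amplitude)
        ∨ (∃ osc : ℝ × ℝ → ℝ,
            ((∃ j, osc = fun x => Real.cos (2 * phase (K j) x))
              ∨ (∃ j, osc = fun x => Real.sin (2 * phase (K j) x))
              ∨ (∃ j j' : Fin 2, j ≠ j' ∧
                  (osc = (fun x => Real.cos (phase (K j) x) * Real.cos (phase (K j') x))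
                  ∨ osc = (fun x => Real.sin (phase (K j) x) * Real.sin (phase (K j') x))
                  ∨ osc = (fun x => Real.sin (phase (K j) x) * Real.cos (phase (K j') x)))))
            ∧ ∃ (g h : ℝ × ℝ → ℂ) (vec : ℂ × ℂ),
                (∃ (j : Fin 2) (u : ℝ × ℝ), g = dAmp (S j) (c j) u)
                ∧ (∃ j' : Fin 2, h = amp (S j') (c j')
                    ∨ ∃ u' : ℝ × ℝ, h = dAmp (S j') (c j') u')
                ∧ ∀ x, t i x = (Complex.ofReal (osc x) * g x * h x) • vec) :=
  building_block_decomposition_general lam ξ K hK S c
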